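/- arXiv:2206.02340 — 2 statements merged into one kernel-verified Lean document; each statement's English description precedes it below -/
import Mathlib

section
/- Compressing data to summaries cannot decrease the expected posterior entropy: −∫∫ p(z,θ) log h(θ|T z) d(μ₀⊗λ) ≥ −∫∫ p(z,θ) log f(θ|z) d(μ₀⊗λ), i.e. the expected posterior entropy given only the summaries T(z) is greater than or equal to the expected posterior entropy given the full dataset z. -/
open MeasureTheory Real

/-- Compressing data to summaries cannot decrease the expected posterior entropy. -/
theorem epe_summary_ge_epe_full_data
    {Z Θ S : Type*} [MeasurableSpace Z] [MeasurableSpace Θ] [MeasurableSpace S]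
    (μ₀ : Measure Z) (lam : Measure Θ) (ν : Measure S)
    [SigmaFinite μ₀] [SigmaFinite lam] [SigmaFinite ν]
    (p : Z × Θ → ℝ) (hp_meas : Measurable p) (hp_nonneg : ∀ x, 0 ≤ p x)
    (hp_one : ∫ x, p x ∂(μ₀.prod lam) = 1)
    (T : Z → S) (hT : Measurable T)
    (q : S × Θ → ℝ) (hq_meas : Measurable q) (hq_nonneg : ∀ y, 0 ≤ q y)
    (hq : ∀ g : S × Θ → ℝ, Measurable g → (∃ C, ∀ y, |g y| ≤ C) →
      ∫ x, p x * g (T x.1, x.2) ∂(μ₀.prod lam) = ∫ y, q y * g y ∂(ν.prod lam))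
    (mZ : Z → ℝ) (hmZ : ∀ z, mZ z = ∫ θ, p (z, θ) ∂lam)
    (mS : S → ℝ) (hmS : ∀ s, mS s = ∫ θ, q (s, θ) ∂lam)
    (f : Z × Θ → ℝ) (hf : ∀ x, 0 < mZ x.1 → f x = p x / mZ x.1)
    (h : S × Θ → ℝ) (hh : ∀ y, 0 < mS y.1 → h y = q y / mS y.1)
    (hpos : ∀ᵐ x ∂(μ₀.prod lam), 0 < p x → 0 < mZ x.1 ∧ 0 < mS (T x.1))
    (hint_f : Integrable (fun x => p x * log (f x)) (μ₀.prod lam))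
    (hint_h : Integrable (fun x => p x * log (h (T x.1, x.2))) (μ₀.prod lam)) :
    -∫ x, p x * log (h (T x.1, x.2)) ∂(μ₀.prod lam)
      ≥ -∫ x, p x * log (f x) ∂(μ₀.prod lam) := by
  -- p is integrable (otherwise its integral would be 0, not 1)
  have hp_int : Integrable p (μ₀.prod lam) := by
    by_contra hc
    rw [integral_undef hc] at hp_one
    norm_num at hp_one
  -- nonnegativity of marginals
  have hmZ_nonneg : ∀ z, 0 ≤ mZ z := fun z => by
    rw [hmZ z]; exact integral_nonneg fun θ => hp_nonneg _
  have hmS_nonneg : ∀ s, 0 ≤ mS s := fun s => by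
    rw [hmS s]; exact integral_nonneg fun θ => hq_nonneg _
  -- measurability of marginals
  have hmZ_meas : Measurable mZ := by
    have h1 : StronglyMeasurable fun z => ∫ θ, p (z, θ) ∂lam :=
      hp_meas.stronglyMeasurable.integral_prod_right'
    have : mZ = fun z => ∫ θ, p (z, θ) ∂lam := funext hmZ
    rw [this]; exact h1.measurable
  have hmS_meas : Measurable mS := by
    have h1 : StronglyMeasurable fun s => ∫ θ, q (s, θ) ∂lam :=
      hq_meas.stronglyMeasurable.integral_prod_right'
    have : mS = fun s => ∫ θ, q (s, θ) ∂lam := funext hmS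
    rw [this]; exact h1.measurable
  -- the map x ↦ (T x.1, x.2) is measurable
  have hTmap : Measurable fun x : Z × Θ => (T x.1, x.2) :=
    (hT.comp measurable_fst).prodMk measurable_snd
  -- a.e. on {p > 0}, q (T z, θ) > 0
  have hqpos : ∀ᵐ x ∂(μ₀.prod lam), 0 < p x → 0 < q (T x.1, x.2) := by
    set g : S × Θ → ℝ := fun y => if q y = 0 then 1 else 0 with hg
    have hg_meas : Measurable g := by
      exact Measurable.ite (hq_meas (measurableSet_singleton 0)) measurable_const
        measurable_const
    have hg_bd : ∃ C, ∀ y, |g y| ≤ C := by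
      refine ⟨1, fun y => ?_⟩
      by_cases hqy : q y = 0 <;> simp [hg, hqy]
    have h0 : ∫ x, p x * g (T x.1, x.2) ∂(μ₀.prod lam) = 0 := by
      rw [hq g hg_meas hg_bd]
      have : (fun y => q y * g y) = fun _ => 0 := by
        funext y
        by_cases hqy : q y = 0 <;> simp [hg, hqy]
      rw [this, integral_zero]
    have hInt : Integrable (fun x => p x * g (T x.1, x.2)) (μ₀.prod lam) := by
      refine hp_int.mono' ((hp_meas.mul (hg_meas.comp hTmap)).aestronglyMeasurable) ?_
      filter_upwards with x
      rw [Real.norm_eq_abs, abs_mul, abs_of_nonneg (hp_nonneg x)]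
      by_cases hqy : q (T x.1, x.2) = 0 <;>
        simp [hg, hqy, hp_nonneg x]
    have hnn : 0 ≤ᵐ[μ₀.prod lam] fun x => p x * g (T x.1, x.2) := by
      filter_upwards with x
      by_cases hqy : q (T x.1, x.2) = 0 <;> simp [hg, hqy, hp_nonneg x]
    have hz := (integral_eq_zero_iff_of_nonneg_ae hnn hInt).mp h0
    filter_upwards [hz] with x hx hxp
    by_contra hq0
    have hq0' : q (T x.1, x.2) = 0 :=
      le_antisymm (not_lt.mp hq0) (hq_nonneg _)
    simp only [hg, hq0', if_pos, mul_one] at hx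
    exact absurd hx (ne_of_gt hxp)
  -- the comparison function ψ
  set ψ : Z × Θ → ℝ :=
    fun x => if 0 < p x then mZ x.1 * (q (T x.1, x.2) / mS (T x.1)) else 0 with hψ
  have hψ_nonneg : ∀ x, 0 ≤ ψ x := by
    intro x
    by_cases hx : 0 < p x
    · simp only [hψ, if_pos hx]
      exact mul_nonneg (hmZ_nonneg _) (div_nonneg (hq_nonneg _) (hmS_nonneg _))
    · simp [hψ, hx]
  have hψ_meas : Measurable ψ := by
    refine Measurable.ite ?_ ?_ measurable_const
    · exact measurableSet_lt measurable_const hp_meas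
    · exact (hmZ_meas.comp measurable_fst).mul
        ((hq_meas.comp hTmap).div (hmS_meas.comp (hT.comp measurable_fst)))
  -- bound on the lintegral of ψ
  have hlin : ∫⁻ x, ENNReal.ofReal (ψ x) ∂(μ₀.prod lam) ≤ 1 := by
    have step1 : ∫⁻ x, ENNReal.ofReal (ψ x) ∂(μ₀.prod lam)
        ≤ ∫⁻ x, ENNReal.ofReal (mZ x.1 * (q (T x.1, x.2) / mS (T x.1))) ∂(μ₀.prod lam) := by
      refine lintegral_mono fun x => ?_
      by_cases hx : 0 < p x
      · simp [hψ, hx]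
      · simp [hψ, hx]
    have hφ_meas : Measurable fun x : Z × Θ =>
        ENNReal.ofReal (mZ x.1 * (q (T x.1, x.2) / mS (T x.1))) :=
      ((hmZ_meas.comp measurable_fst).mul
        ((hq_meas.comp hTmap).div (hmS_meas.comp (hT.comp measurable_fst)))).ennreal_ofReal
    have step2 : ∫⁻ x, ENNReal.ofReal (mZ x.1 * (q (T x.1, x.2) / mS (T x.1))) ∂(μ₀.prod lam)
        = ∫⁻ z, ∫⁻ θ, ENNReal.ofReal (mZ z * (q (T z, θ) / mS (T z))) ∂lam ∂μ₀ :=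
      lintegral_prod _ hφ_meas.aemeasurable
    have step3 : ∀ z, ∫⁻ θ, ENNReal.ofReal (mZ z * (q (T z, θ) / mS (T z))) ∂lam
        ≤ ENNReal.ofReal (mZ z) := by
      intro z
      have hrw : ∀ θ, mZ z * (q (T z, θ) / mS (T z))
          = (mZ z / mS (T z)) * q (T z, θ) := fun θ => by ring
      simp only [hrw]
      have hconst : ∀ θ, ENNReal.ofReal ((mZ z / mS (T z)) * q (T z, θ))
          = ENNReal.ofReal (mZ z / mS (T z)) * ENNReal.ofReal (q (T z, θ)) := fun θ =>
        ENNReal.ofReal_mul (div_nonneg (hmZ_nonneg z) (hmS_nonneg _))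
      simp only [hconst]
      have hm : Measurable fun θ : Θ => ENNReal.ofReal (q (T z, θ)) :=
        (hq_meas.comp measurable_prodMk_left).ennreal_ofReal
      rw [lintegral_const_mul _ hm]
      rcases eq_or_lt_of_le (hmS_nonneg (T z)) with hms0 | hms
      · rw [← hms0]
        simp
      · -- mS (T z) > 0, so q (T z, ·) is integrable with integral mS (T z)
        have hqint : Integrable (fun θ => q (T z, θ)) lam := by
          by_contra hc
          rw [hmS (T z), integral_undef hc] at hms
          exact lt_irrefl 0 hms
        have hqi : ∫⁻ θ, ENNReal.ofReal (q (T z, θ)) ∂lam = ENNReal.ofReal (mS (T z)) := by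
          rw [hmS (T z)]
          exact (ofReal_integral_eq_lintegral_ofReal hqint
            (Filter.Eventually.of_forall fun θ => hq_nonneg _)).symm
        rw [hqi, ← ENNReal.ofReal_mul (div_nonneg (hmZ_nonneg z) (hmS_nonneg _)),
          div_mul_cancel₀ _ (ne_of_gt hms)]
    have step4 : ∫⁻ z, ENNReal.ofReal (mZ z) ∂μ₀ = 1 := by
      have hae : ∀ᵐ z ∂μ₀, ENNReal.ofReal (mZ z)
          = ∫⁻ θ, ENNReal.ofReal (p (z, θ)) ∂lam := by
        filter_upwards [hp_int.prod_right_ae] with z hz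
        rw [hmZ z]
        exact ofReal_integral_eq_lintegral_ofReal hz
          (Filter.Eventually.of_forall fun θ => hp_nonneg _)
      rw [lintegral_congr_ae hae,
        ← lintegral_prod _ (hp_meas.ennreal_ofReal).aemeasurable,
        ← ofReal_integral_eq_lintegral_ofReal hp_int
          (Filter.Eventually.of_forall hp_nonneg), hp_one, ENNReal.ofReal_one]
    calc ∫⁻ x, ENNReal.ofReal (ψ x) ∂(μ₀.prod lam)
        ≤ ∫⁻ z, ∫⁻ θ, ENNReal.ofReal (mZ z * (q (T z, θ) / mS (T z))) ∂lam ∂μ₀ := by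
          rw [← step2]; exact step1
      _ ≤ ∫⁻ z, ENNReal.ofReal (mZ z) ∂μ₀ := lintegral_mono step3
      _ = 1 := step4
  -- ψ is integrable with integral at most 1
  have hψ_int : Integrable ψ (μ₀.prod lam) := by
    refine ⟨hψ_meas.aestronglyMeasurable, ?_⟩
    rw [hasFiniteIntegral_iff_ofReal (Filter.Eventually.of_forall hψ_nonneg)]
    exact lt_of_le_of_lt hlin ENNReal.one_lt_top
  have hψ_le_one : ∫ x, ψ x ∂(μ₀.prod lam) ≤ 1 := by
    rw [integral_eq_lintegral_of_nonneg_ae (Filter.Eventually.of_forall hψ_nonneg)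
      hψ_meas.aestronglyMeasurable]
    calc (∫⁻ x, ENNReal.ofReal (ψ x) ∂(μ₀.prod lam)).toReal
        ≤ (1 : ENNReal).toReal := ENNReal.toReal_mono ENNReal.one_ne_top hlin
      _ = 1 := by simp
  -- the pointwise a.e. key inequality
  have hae : ∀ᵐ x ∂(μ₀.prod lam),
      p x * log (h (T x.1, x.2)) ≤ ψ x - p x + p x * log (f x) := by
    filter_upwards [hpos, hqpos] with x hx hqx
    by_cases hp0 : 0 < p x
    · obtain ⟨hmZp, hmSp⟩ := hx hp0
      have hqp := hqx hp0
      have hfx : f x = p x / mZ x.1 := hf x hmZp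
      have hhx : h (T x.1, x.2) = q (T x.1, x.2) / mS (T x.1) := hh _ hmSp
      have hf_pos : 0 < f x := by rw [hfx]; exact div_pos hp0 hmZp
      have hh_pos : 0 < h (T x.1, x.2) := by rw [hhx]; exact div_pos hqp hmSp
      have key : log (h (T x.1, x.2) / f x) ≤ h (T x.1, x.2) / f x - 1 :=
        Real.log_le_sub_one_of_pos (div_pos hh_pos hf_pos)
      rw [Real.log_div (ne_of_gt hh_pos) (ne_of_gt hf_pos)] at key
      have hmul : p x * (log (h (T x.1, x.2)) - log (f x))
          ≤ p x * (h (T x.1, x.2) / f x - 1) :=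
        mul_le_mul_of_nonneg_left key (hp_nonneg x)
      have hψx : ψ x = mZ x.1 * (q (T x.1, x.2) / mS (T x.1)) := by
        simp [hψ, hp0]
      have hpf : p x * (h (T x.1, x.2) / f x) = ψ x := by
        rw [hψx, hhx, hfx]
        field_simp
      nlinarith [hmul, hpf]
    · have hp0' : p x = 0 := le_antisymm (not_lt.mp hp0) (hp_nonneg x)
      have hψ0 : ψ x = 0 := by simp [hψ, hp0]
      rw [hp0', hψ0]
      ring_nf
      simp
  -- put everything together
  have hineq : ∫ x, p x * log (h (T x.1, x.2)) ∂(μ₀.prod lam)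
      ≤ ∫ x, (ψ x - p x + p x * log (f x)) ∂(μ₀.prod lam) :=
    integral_mono_ae hint_h ((hψ_int.sub hp_int).add hint_f) hae
  have hψp : Integrable (fun x => ψ x - p x) (μ₀.prod lam) := hψ_int.sub hp_int
  rw [integral_add hψp hint_f, integral_sub hψ_int hp_int, hp_one] at hineq
  have : ∫ x, p x * log (h (T x.1, x.2)) ∂(μ₀.prod lam)
      ≤ ∫ x, p x * log (f x) ∂(μ₀.prod lam) := by linarith
  linarith
end

section
/- Lossless (in particular sufficient) summaries attain the maximal mutual information: in the setting of a joint density p(z,θ) of data and parameters and a joint density q(s,θ) of the summary T(z) and parameters, if the conditional posterior densities satisfy f(θ|z) = h(θ|T z) for (μ₀⊗λ)-almost every (z,θ) with p(z,θ) > 0, then ∫∫ q(s,θ) log( q(s,θ)/(π(θ) m_S(s)) ) d(ν⊗λ) = ∫∫ p(z,θ) log( p(z,θ)/(π(θ) m_Z(z)) ) d(μ₀⊗λ), i.e. I(θ; T(z)) = I(θ; z). -/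
/-!
Losslessness says that `p(z,θ) / (π(θ) m_Z(z)) = g(T z, θ)` on the support of `p`, where
`g(s,θ) = q(s,θ) / (π(θ) m_S(s))`. Since `q` is the density of the law of `(T z, θ)` under
`p(z,θ) d(μ₀⊗λ)`, integrating any measurable function of `(T z, θ)` against `p` is the same as
integrating it against `q`; applied to `log g` this identifies the two mutual informations.
-/

open MeasureTheory Real

namespace MeasureTheory

variable {α β : Type*} [MeasurableSpace α] [MeasurableSpace β] {μ : Measure α} {ν : Measure β}
  {p : α → ℝ} {q : β → ℝ} {φ : α → β}

theorem integral_withDensity_ofReal (hp : Measurable p) (hp0 : ∀ x, 0 ≤ p x) (g : α → ℝ) :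
    ∫ x, g x ∂μ.withDensity (fun x => ENNReal.ofReal (p x)) = ∫ x, p x * g x ∂μ := by
  rw [integral_withDensity_eq_integral_toReal_smul hp.ennreal_ofReal
    (ae_of_all _ fun _ => ENNReal.ofReal_lt_top)]
  simp [ENNReal.toReal_ofReal, hp0]

theorem integral_map_withDensity_ofReal (hp : Measurable p) (hp0 : ∀ x, 0 ≤ p x)
    (hφ : Measurable φ) {g : β → ℝ} (hg : Measurable g) :
    ∫ y, g y ∂(μ.withDensity fun x => ENNReal.ofReal (p x)).map φ
      = ∫ x, p x * g (φ x) ∂μ := by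
  rw [integral_map hφ.aemeasurable hg.aestronglyMeasurable, integral_withDensity_ofReal hp hp0]

theorem map_withDensity_ofReal_eq_of_integral_mul_comp_eq (hp : Measurable p)
    (hp0 : ∀ x, 0 ≤ p x) (hpi : Integrable p μ) (hq : Measurable q) (hq0 : ∀ y, 0 ≤ q y)
    (hqi : Integrable q ν) (hφ : Measurable φ)
    (h : ∀ g : β → ℝ, Measurable g → (∃ C, ∀ y, |g y| ≤ C) →
      ∫ x, p x * g (φ x) ∂μ = ∫ y, q y * g y ∂ν) :
    (μ.withDensity fun x => ENNReal.ofReal (p x)).map φ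
      = ν.withDensity fun y => ENNReal.ofReal (q y) := by
  have := isFiniteMeasure_withDensity_ofReal hpi.2
  have := isFiniteMeasure_withDensity_ofReal hqi.2
  ext s hs
  rw [← measureReal_eq_measureReal_iff (measure_ne_top _ _) (measure_ne_top _ _),
    ← integral_indicator_one hs, ← integral_indicator_one hs,
    integral_map_withDensity_ofReal hp hp0 hφ (measurable_one.indicator hs),
    integral_withDensity_ofReal hq hq0]
  refine h _ (measurable_one.indicator hs) ⟨1, fun y => ?_⟩
  by_cases hy : y ∈ s <;> simp [hy]

theorem integral_mul_comp_eq_of_forall_bounded (hp : Measurable p) (hp0 : ∀ x, 0 ≤ p x)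
    (hpi : Integrable p μ) (hq : Measurable q) (hq0 : ∀ y, 0 ≤ q y) (hqi : Integrable q ν)
    (hφ : Measurable φ)
    (h : ∀ g : β → ℝ, Measurable g → (∃ C, ∀ y, |g y| ≤ C) →
      ∫ x, p x * g (φ x) ∂μ = ∫ y, q y * g y ∂ν)
    {g : β → ℝ} (hg : Measurable g) :
    ∫ x, p x * g (φ x) ∂μ = ∫ y, q y * g y ∂ν := by
  rw [← integral_map_withDensity_ofReal hp hp0 hφ hg,
    map_withDensity_ofReal_eq_of_integral_mul_comp_eq hp hp0 hpi hq hq0 hqi hφ h,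
    integral_withDensity_ofReal hq hq0]

end MeasureTheory

theorem lossless_summaries_attain_max_mutual_info_general
    {Z Θ S : Type*} [MeasurableSpace Z] [MeasurableSpace Θ] [MeasurableSpace S]
    (μ₀ : Measure Z) (lam : Measure Θ) (ν : Measure S)
    [SigmaFinite μ₀] [SigmaFinite lam]
    (p : Z × Θ → ℝ) (hp_meas : Measurable p) (hp_nonneg : ∀ x, 0 ≤ p x)
    (hp_one : ∫ x, p x ∂(μ₀.prod lam) = 1)
    (T : Z → S) (hT : Measurable T)
    (q : S × Θ → ℝ) (hq_meas : Measurable q) (hq_nonneg : ∀ y, 0 ≤ q y)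
    (hq : ∀ g : S × Θ → ℝ, Measurable g → (∃ C, ∀ y, |g y| ≤ C) →
      ∫ x, p x * g (T x.1, x.2) ∂(μ₀.prod lam) = ∫ y, q y * g y ∂(ν.prod lam))
    (mZ : Z → ℝ)
    (mS : S → ℝ) (hmS : ∀ s, mS s = ∫ θ, q (s, θ) ∂lam)
    (prior : Θ → ℝ) (hprior : ∀ θ, prior θ = ∫ z, p (z, θ) ∂μ₀)
    -- losslessness: the two conditional posterior densities agree a.e. on the support
    (hlossless : ∀ᵐ x ∂(μ₀.prod lam), 0 < p x →
      p x / mZ x.1 = q (T x.1, x.2) / mS (T x.1)) :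
    ∫ y, q y * log (q y / (prior y.2 * mS y.1)) ∂(ν.prod lam)
      = ∫ x, p x * log (p x / (prior x.2 * mZ x.1)) ∂(μ₀.prod lam) := by
  have hprior_meas : Measurable prior :=
    funext hprior ▸ (hp_meas.stronglyMeasurable.integral_prod_left' (μ := μ₀)).measurable
  have hmS_meas : Measurable mS :=
    funext hmS ▸ (hq_meas.stronglyMeasurable.integral_prod_right' (ν := lam)).measurable
  have hp_int : Integrable p (μ₀.prod lam) := .of_integral_ne_zero (hp_one ▸ one_ne_zero)
  have hq_int : Integrable q (ν.prod lam) := by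
    have hq_one := hq (fun _ => 1) measurable_const ⟨1, fun _ => by simp⟩
    simp only [mul_one, hp_one] at hq_one
    exact .of_integral_ne_zero (hq_one ▸ one_ne_zero)
  rw [← integral_mul_comp_eq_of_forall_bounded hp_meas hp_nonneg hp_int hq_meas hq_nonneg hq_int
    (by fun_prop : Measurable fun x : Z × Θ => (T x.1, x.2)) hq (by fun_prop)]
  refine integral_congr_ae ?_
  filter_upwards [hlossless] with x hx
  rcases (hp_nonneg x).eq_or_lt with h | h
  · simp [← h]
  · rw [mul_comm (prior _) (mS _), mul_comm (prior _) (mZ _), ← div_div, ← div_div, hx h]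

/-- Lossless (in particular sufficient) summaries attain the maximal mutual
information: if the posterior given the summary `T z` agrees with the posterior
given the full data `z` (almost everywhere on the support of the joint density),
then `I(θ; T z) = I(θ; z)`. -/
theorem lossless_summaries_attain_max_mutual_info
    {Z Θ S : Type*} [MeasurableSpace Z] [MeasurableSpace Θ] [MeasurableSpace S]
    (μ₀ : Measure Z) (lam : Measure Θ) (ν : Measure S)
    [SigmaFinite μ₀] [SigmaFinite lam] [SigmaFinite ν]
    (p : Z × Θ → ℝ) (hp_meas : Measurable p) (hp_nonneg : ∀ x, 0 ≤ p x)
    (hp_one : ∫ x, p x ∂(μ₀.prod lam) = 1)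
    (T : Z → S) (hT : Measurable T)
    (q : S × Θ → ℝ) (hq_meas : Measurable q) (hq_nonneg : ∀ y, 0 ≤ q y)
    (hq : ∀ g : S × Θ → ℝ, Measurable g → (∃ C, ∀ y, |g y| ≤ C) →
      ∫ x, p x * g (T x.1, x.2) ∂(μ₀.prod lam) = ∫ y, q y * g y ∂(ν.prod lam))
    (mZ : Z → ℝ) (hmZ : ∀ z, mZ z = ∫ θ, p (z, θ) ∂lam)
    (mS : S → ℝ) (hmS : ∀ s, mS s = ∫ θ, q (s, θ) ∂lam)
    (prior : Θ → ℝ) (hprior : ∀ θ, prior θ = ∫ z, p (z, θ) ∂μ₀)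
    (hpos_p : ∀ᵐ x ∂(μ₀.prod lam), 0 < p x → 0 < mZ x.1 ∧ 0 < mS (T x.1))
    (hpos_q : ∀ᵐ y ∂(ν.prod lam), 0 < q y → 0 < mS y.1)
    -- integrability of all entropy integrands
    (hp1 : Integrable (fun x => p x * log (p x)) (μ₀.prod lam))
    (hp2 : Integrable (fun x => p x * log (mZ x.1)) (μ₀.prod lam))
    (hp3 : Integrable (fun x => p x * log (prior x.2)) (μ₀.prod lam))
    (hq1 : Integrable (fun y => q y * log (q y)) (ν.prod lam))
    (hq2 : Integrable (fun y => q y * log (mS y.1)) (ν.prod lam))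
    (hq3 : Integrable (fun y => q y * log (prior y.2)) (ν.prod lam))
    -- losslessness: the two conditional posterior densities agree a.e. on the support
    (hlossless : ∀ᵐ x ∂(μ₀.prod lam), 0 < p x →
      p x / mZ x.1 = q (T x.1, x.2) / mS (T x.1)) :
    ∫ y, q y * log (q y / (prior y.2 * mS y.1)) ∂(ν.prod lam)
      = ∫ x, p x * log (p x / (prior x.2 * mZ x.1)) ∂(μ₀.prod lam) :=
  lossless_summaries_attain_max_mutual_info_general μ₀ lam ν p hp_meas hp_nonneg hp_one T hT q
    hq_meas hq_nonneg hq mZ mS hmS prior hprior hlossless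
end
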